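/- arXiv:2208.13420 — 7 statements merged into one kernel-verified Lean document; each statement's English description precedes it below -/
import Mathlib

section
/- Let G(λ) be an invertible n×n complex matrix with M := G(λ)^{-1}, let λ ∈ ℂ, let w₁,…,w_k ∈ ℂ, and let ΔA₀,…,ΔA_d, ΔE₁,…,ΔE_k ∈ ℂ^{n×n}. Set ΔG := Σ_{p=0}^d λ^p ΔA_p + Σ_{j=1}^k w_j ΔE_j. Then det(G(λ) − ΔG) = 0 if and only if there exist vectors v_{A₀},…,v_{A_d}, v_{E₁},…,v_{E_k} ∈ ℂⁿ with v_λ := Σ_{p=0}^d λ^p v_{A_p} + Σ_{j=1}^k w_j v_{E_j} ≠ 0 such that v_{A_p} = ΔA_p M v_λ for all p and v_{E_j} = ΔE_j M v_λ for all j. -/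
/-!
Writing a null vector of `G - ΔG` as `G⁻¹ v`, the matrix is singular iff `ΔG G⁻¹` fixes some
`v ≠ 0`. Since `ΔG` is a linear combination of the `ΔA_p`, `ΔE_j`, the vectors `ΔA_p G⁻¹ v`,
`ΔE_j G⁻¹ v` recombine with the same coefficients to `v`; conversely, any such structured family
recombines to a fixed vector.
-/

open Finset Matrix

section

variable {K m : Type*} [Field K] [Fintype m] [DecidableEq m]

theorem det_sub_eq_zero_iff_exists_mulVec_nonsing_inv {G Δ : Matrix m m K} (hG : IsUnit G) :
    (G - Δ).det = 0 ↔ ∃ v ≠ 0, Δ *ᵥ (G⁻¹ *ᵥ v) = v := by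
  have hdet := (isUnit_iff_isUnit_det G).mp hG
  have inv_G : ∀ u, G⁻¹ *ᵥ (G *ᵥ u) = u := fun u => by
    rw [mulVec_mulVec, nonsing_inv_mul G hdet, one_mulVec]
  have G_inv : ∀ v, G *ᵥ (G⁻¹ *ᵥ v) = v := fun v => by
    rw [mulVec_mulVec, mul_nonsing_inv G hdet, one_mulVec]
  rw [← exists_mulVec_eq_zero_iff]
  simp only [sub_mulVec, sub_eq_zero]
  constructor
  · rintro ⟨u, hu, hGu⟩
    refine ⟨G *ᵥ u, fun h => hu ?_, by rw [inv_G, hGu]⟩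
    rw [← inv_G u, h, mulVec_zero]
  · rintro ⟨v, hv, hΔv⟩
    refine ⟨G⁻¹ *ᵥ v, fun h => hv ?_, by rw [G_inv, hΔv]⟩
    rw [← G_inv v, h, mulVec_zero]

end

section

variable {R m ι : Type*} [CommSemiring R] [Fintype m] [Fintype ι]

theorem exists_sum_smul_mulVec_eq_self_iff (M : Matrix m m R) (c : ι → R)
    (D : ι → Matrix m m R) :
    (∃ v ≠ 0, (∑ i, c i • D i) *ᵥ (M *ᵥ v) = v) ↔
      ∃ x : ι → m → R, ∑ i, c i • x i ≠ 0 ∧ ∀ i, x i = D i *ᵥ (M *ᵥ ∑ j, c j • x j) := by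
  simp only [sum_mulVec, smul_mulVec]
  constructor
  · rintro ⟨v, hv, hDv⟩
    exact ⟨fun i => D i *ᵥ (M *ᵥ v), by rwa [hDv], fun i => by rw [hDv]⟩
  · rintro ⟨x, hx, hDx⟩
    exact ⟨_, hx, Finset.sum_congr rfl fun i _ => by rw [← hDx i]⟩

end

/-- Lemma 2.4: with `M := G(λ)⁻¹` and
`ΔG = ∑ λ^p ΔA_p + ∑ w_j ΔE_j`, one has `det (G(λ) - ΔG) = 0` iff there exist
vectors `v_{A_p}`, `v_{E_j}` with `v_λ := ∑ λ^p v_{A_p} + ∑ w_j v_{E_j} ≠ 0` such that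
`v_{A_p} = ΔA_p M v_λ` and `v_{E_j} = ΔE_j M v_λ`. -/
theorem det_pert_eq_zero_iff_structured_mapping {n d k : ℕ}
    (Gl : Matrix (Fin n) (Fin n) ℂ) (hG : IsUnit Gl) (lam : ℂ) (w : Fin k → ℂ)
    (ΔA : Fin (d + 1) → Matrix (Fin n) (Fin n) ℂ)
    (ΔE : Fin k → Matrix (Fin n) (Fin n) ℂ) :
    (Gl - (∑ p : Fin (d + 1), lam ^ (p : ℕ) • ΔA p + ∑ j, w j • ΔE j)).det = 0 ↔
      ∃ (vA : Fin (d + 1) → Fin n → ℂ) (vE : Fin k → Fin n → ℂ),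
        (∑ p : Fin (d + 1), lam ^ (p : ℕ) • vA p + ∑ j, w j • vE j) ≠ 0 ∧
        (∀ p, vA p =
          (ΔA p).mulVec (Gl⁻¹.mulVec (∑ q : Fin (d + 1), lam ^ (q : ℕ) • vA q + ∑ j, w j • vE j))) ∧
        (∀ j, vE j =
          (ΔE j).mulVec (Gl⁻¹.mulVec (∑ q : Fin (d + 1), lam ^ (q : ℕ) • vA q + ∑ i, w i • vE i))) := by
  have structured := exists_sum_smul_mulVec_eq_self_iff Gl⁻¹
    (Sum.elim (fun p : Fin (d + 1) => lam ^ (p : ℕ)) w) (Sum.elim ΔA ΔE)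
  rw [det_sub_eq_zero_iff_exists_mulVec_nonsing_inv hG]
  rw [(Equiv.sumArrowEquivProdArrow _ _ _).symm.surjective.exists, Prod.exists] at structured
  simpa [Fintype.sum_sum_type, Sum.forall] using structured
end

section
/- Let Ω, Λ ∈ ℂ^{1×m} be linearly independent row vectors and let M ∈ ℂ^{n×n} be nonsingular. Then the matrix F = Ωᵀ Λ ⊗ M + Λᵀ Ω ⊗ Mᵀ ∈ ℂ^{mn×mn} has rank exactly 2n. -/
/-!
Let `W` be the `2 × m` matrix with rows `Ω, Λ`. Then `Ωᵀ Λ = Wᵀ E₀₁ W` and `Λᵀ Ω = Wᵀ E₁₀ W`, so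
`F = (W ⊗ I)ᵀ D (W ⊗ I)` with `D = E₀₁ ⊗ M + E₁₀ ⊗ Mᵀ`, the block matrix `[[0, M], [Mᵀ, 0]]`,
which is invertible. Independence of the rows makes `W`, hence `W ⊗ I`, right invertible, and
conjugating by a right-invertible matrix preserves rank, so `rank F = rank D = 2n`.
-/

open Matrix Kronecker

namespace Matrix

variable {ι m n R : Type*}

theorem exists_mul_eq_one_of_linearIndependent_row [Field R] [Fintype ι] [DecidableEq ι]
    [Fintype m] {W : Matrix ι m R} (h : LinearIndependent R W.row) :
    ∃ Z : Matrix m ι R, W * Z = 1 := by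
  rw [← mulVec_surjective_iff_exists_right_inverse, ← coe_mulVecLin, ← LinearMap.range_eq_top]
  refine Submodule.eq_top_of_finrank_eq ?_
  rw [← rank, h.rank_matrix, Module.finrank_fintype_fun_eq_card]

theorem rank_transpose_mul_mul_of_mul_eq_one [CommRing R] [StrongRankCondition R] [Fintype ι]
    [DecidableEq ι] [Fintype m] {W : Matrix ι m R} {Z : Matrix m ι R} (hWZ : W * Z = 1)
    (D : Matrix ι ι R) : (Wᵀ * D * W).rank = D.rank := by
  refine le_antisymm ((rank_mul_le_left _ _).trans (rank_mul_le_right _ _)) ?_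
  have hD : Zᵀ * (Wᵀ * D * W) * Z = D := by
    rw [← Matrix.mul_assoc, ← Matrix.mul_assoc, ← transpose_mul, hWZ, Matrix.mul_assoc, hWZ]
    simp
  calc D.rank = (Zᵀ * (Wᵀ * D * W) * Z).rank := by rw [hD]
    _ ≤ (Wᵀ * D * W).rank := (rank_mul_le_left _ _).trans (rank_mul_le_right _ _)

theorem vecMulVec_eq_transpose_mul_single_mul [Fintype ι] [DecidableEq ι] [CommSemiring R]
    (W : Matrix ι m R) (i j : ι) : vecMulVec (W i) (W j) = Wᵀ * single i j (1 : R) * W := by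
  ext k l
  simp [vecMulVec_apply, mul_apply, single_apply, ite_and]

theorem mul_mul_kronecker {l p : Type*} [CommSemiring R] [Fintype ι] [Fintype m] [Fintype n]
    [DecidableEq n] (A : Matrix l ι R) (B : Matrix ι m R) (C : Matrix m p R) (N : Matrix n n R) :
    (A * B * C) ⊗ₖ N = (A ⊗ₖ (1 : Matrix n n R)) * (B ⊗ₖ N) * (C ⊗ₖ (1 : Matrix n n R)) := by
  rw [← mul_kronecker_mul, ← mul_kronecker_mul, Matrix.one_mul, Matrix.mul_one]

theorem isUnit_single_kronecker_add_single_kronecker [CommRing R] [Fintype n] [DecidableEq n]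
    {M N : Matrix n n R} (hM : IsUnit M) (hN : IsUnit N) :
    IsUnit (single (0 : Fin 2) (1 : Fin 2) (1 : R) ⊗ₖ M + single 1 0 1 ⊗ₖ N) := by
  obtain ⟨u, rfl⟩ := hM
  obtain ⟨v, rfl⟩ := hN
  refine (isUnit_iff_isUnit_det _).mpr (isUnit_det_of_right_inverse
    (B := single 0 1 1 ⊗ₖ ↑v⁻¹ + single 1 0 1 ⊗ₖ ↑u⁻¹) ?_)
  have hsum : single (1 : Fin 2) (1 : Fin 2) (1 : R) + single 0 0 1 = 1 := by
    ext i j; fin_cases i <;> fin_cases j <;> simp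
  simp [add_mul, mul_add, ← mul_kronecker_mul, ← add_kronecker, hsum]

end Matrix

open Matrix Kronecker in
/-- If row vectors `Ω, Λ ∈ ℂ^{1×m}` are linearly independent and `M ∈ ℂ^{n×n}` is
nonsingular, then `F = Ωᵀ Λ ⊗ M + Λᵀ Ω ⊗ Mᵀ` has rank exactly `2n`. -/
theorem rank_vecMulVec_kronecker_add {m n : ℕ}
    (Om Lam : Fin m → ℂ) (h : LinearIndependent ℂ ![Om, Lam])
    (M : Matrix (Fin n) (Fin n) ℂ) (hM : IsUnit M) :
    ((vecMulVec Om Lam) ⊗ₖ M + (vecMulVec Lam Om) ⊗ₖ Mᵀ).rank = 2 * n := by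
  set W : Matrix (Fin 2) (Fin m) ℂ := of ![Om, Lam]
  set P := W ⊗ₖ (1 : Matrix (Fin n) (Fin n) ℂ)
  set D := single (0 : Fin 2) (1 : Fin 2) (1 : ℂ) ⊗ₖ M + single 1 0 1 ⊗ₖ Mᵀ
  obtain ⟨Z, hWZ⟩ := exists_mul_eq_one_of_linearIndependent_row (W := W) h
  have hF : vecMulVec Om Lam ⊗ₖ M + vecMulVec Lam Om ⊗ₖ Mᵀ = Pᵀ * D * P := by
    rw [show Om = W 0 from rfl, show Lam = W 1 from rfl, vecMulVec_eq_transpose_mul_single_mul,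
      vecMulVec_eq_transpose_mul_single_mul, mul_mul_kronecker, mul_mul_kronecker]
    simp only [P, D, ← kroneckerMap_transpose, transpose_one, Matrix.mul_add, Matrix.add_mul]
  have hPZ : P * (Z ⊗ₖ (1 : Matrix (Fin n) (Fin n) ℂ)) = 1 := by
    rw [← mul_kronecker_mul, hWZ, Matrix.one_mul, one_kronecker_one]
  have hD : IsUnit D :=
    isUnit_single_kronecker_add_single_kronecker hM ((isUnit_transpose M).mpr hM)
  rw [hF, rank_transpose_mul_mul_of_mul_eq_one hPZ, rank_of_isUnit D hD]
  simp
end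

section
/- Let x, y ∈ ℂⁿ with x ≠ 0. There exists a skew-symmetric matrix Δ ∈ ℂ^{n×n} (Δᵀ = −Δ) with Δx = y if and only if xᵀy = 0. Moreover, when xᵀy = 0, the minimal spectral norm of such a Δ equals ‖y‖/‖x‖. -/
/-!
Necessity: for skew-symmetric `Δ`, `xᵀΔx = (Δᵀx)ᵀx = -xᵀΔx`, so `xᵀΔx = 0`.
Any `Δ` with `Δx = y` has `‖Δ‖ ≥ ‖y‖/‖x‖`, and the rank-two matrix `Δ = (y x* - x̄ yᵀ)/‖x‖²`
attains this bound: it is skew-symmetric, sends `x` to `y` because `yᵀx = 0`, and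
`Δv = (⟪x, v⟫ y - ⟪ȳ, v⟫ x̄)/‖x‖²`. Since `xᵀy = 0` makes both `x ⊥ ȳ` and `y ⊥ x̄`,
Pythagoras and Bessel's inequality for the orthogonal pair `x, ȳ` give `‖Δv‖ ≤ ‖y‖‖v‖/‖x‖`.
-/

/-- The spectral (operator 2-) norm of a complex matrix. -/
noncomputable def specNorm {n : ℕ} (A : Matrix (Fin n) (Fin n) ℂ) : ℝ :=
  ‖Matrix.toEuclideanCLM (𝕜 := ℂ) A‖

/-- The Euclidean norm of a complex vector. -/
noncomputable def evNorm {n : ℕ} (v : Fin n → ℂ) : ℝ :=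
  ‖(WithLp.equiv 2 (Fin n → ℂ)).symm v‖

open scoped InnerProductSpace

section Bessel

variable {𝕜 E : Type*} [RCLike 𝕜] [NormedAddCommGroup E] [InnerProductSpace 𝕜 E]

theorem norm_inner_sq_add_le_of_inner_eq_zero {a b : E} (hab : ⟪a, b⟫_𝕜 = 0) (v : E) :
    ‖⟪a, v⟫_𝕜‖ ^ 2 * ‖b‖ ^ 2 + ‖⟪b, v⟫_𝕜‖ ^ 2 * ‖a‖ ^ 2 ≤ ‖a‖ ^ 2 * ‖b‖ ^ 2 * ‖v‖ ^ 2 := by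
  rcases eq_or_ne a 0 with rfl | ha
  · simp
  rcases eq_or_ne b 0 with rfl | hb
  · simp
  have hon : Orthonormal 𝕜 ![(‖a‖⁻¹ : 𝕜) • a, (‖b‖⁻¹ : 𝕜) • b] := by
    simp [orthonormal_vecCons_iff, norm_smul, inner_smul_left, inner_smul_right, hab, ha, hb]
  have bessel := hon.sum_inner_products_le (s := Finset.univ) (x := v)
  simp only [Fin.sum_univ_two, Matrix.cons_val_zero, Matrix.cons_val_one, inner_smul_left,
    norm_mul, RCLike.norm_conj, norm_inv, RCLike.norm_ofReal, abs_norm, mul_pow, inv_pow] at bessel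
  rw [inv_mul_eq_div, inv_mul_eq_div, div_add_div _ _ (by positivity) (by positivity),
    div_le_iff₀ (by positivity)] at bessel
  linarith

theorem norm_inner_smul_sub_inner_smul_le {a b c d : E} (hab : ⟪a, b⟫_𝕜 = 0) (hcd : ⟪c, d⟫_𝕜 = 0)
    (hc : ‖c‖ = ‖b‖) (hd : ‖d‖ = ‖a‖) (v : E) :
    ‖⟪a, v⟫_𝕜 • c - ⟪b, v⟫_𝕜 • d‖ ≤ ‖a‖ * ‖b‖ * ‖v‖ := by
  have hsq : ‖⟪a, v⟫_𝕜 • c - ⟪b, v⟫_𝕜 • d‖ ^ 2 =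
      ‖⟪a, v⟫_𝕜‖ ^ 2 * ‖b‖ ^ 2 + ‖⟪b, v⟫_𝕜‖ ^ 2 * ‖a‖ ^ 2 := by
    rw [norm_sub_sq (𝕜 := 𝕜), inner_smul_left, inner_smul_right, hcd]
    simp [norm_smul, mul_pow, hc, hd]
  refine le_of_pow_le_pow_left₀ two_ne_zero (by positivity) ?_
  rw [hsq, mul_pow, mul_pow]
  exact norm_inner_sq_add_le_of_inner_eq_zero hab v

end Bessel

namespace Matrix

theorem dotProduct_mulVec_self_eq_zero {ι R : Type*} [Fintype ι] [CommRing R] [NoZeroDivisors R]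
    [CharZero R] {A : Matrix ι ι R} (hA : Aᵀ = -A) (x : ι → R) : x ⬝ᵥ A *ᵥ x = 0 := by
  refine CharZero.eq_neg_self_iff.mp ?_
  calc x ⬝ᵥ A *ᵥ x = Aᵀ *ᵥ x ⬝ᵥ x := by rw [dotProduct_mulVec, mulVec_transpose]
    _ = -(x ⬝ᵥ A *ᵥ x) := by rw [hA, neg_mulVec, neg_dotProduct, dotProduct_comm]

end Matrix

open Matrix WithLp

section SkewMapping

variable {𝕜 ι : Type*} [RCLike 𝕜] [Fintype ι]

theorem EuclideanSpace.norm_toLp_star (x : ι → 𝕜) : ‖toLp 2 (star x)‖ = ‖toLp 2 x‖ := by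
  simp [EuclideanSpace.norm_eq]

noncomputable def skewMapping (x y : ι → 𝕜) : Matrix ι ι 𝕜 :=
  ((‖toLp 2 x‖ ^ 2)⁻¹ : 𝕜) • (vecMulVec y (star x) - vecMulVec (star x) y)

theorem transpose_skewMapping (x y : ι → 𝕜) : (skewMapping x y)ᵀ = -skewMapping x y := by
  simp [skewMapping, transpose_sub, transpose_smul, ← smul_neg]

theorem skewMapping_mulVec (x y v : ι → 𝕜) :
    skewMapping x y *ᵥ v = ((‖toLp 2 x‖ ^ 2)⁻¹ : 𝕜) • ((star x ⬝ᵥ v) • y - (y ⬝ᵥ v) • star x) := by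
  simp [skewMapping, smul_mulVec, sub_mulVec, vecMulVec_mulVec]

theorem skewMapping_mulVec_self {x y : ι → 𝕜} (hx : x ≠ 0) (hxy : x ⬝ᵥ y = 0) :
    skewMapping x y *ᵥ x = y := by
  have hxx : star x ⬝ᵥ x = (‖toLp 2 x‖ ^ 2 : 𝕜) := by
    rw [dotProduct_comm, ← EuclideanSpace.inner_toLp_toLp, inner_self_eq_norm_sq_to_K]
  have hx' : (‖toLp 2 x‖ ^ 2 : 𝕜) ≠ 0 := by simpa using hx
  rw [skewMapping_mulVec, hxx, dotProduct_comm, hxy, zero_smul, sub_zero, inv_smul_smul₀ hx']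

theorem norm_toEuclideanCLM_skewMapping_le [DecidableEq ι] {x y : ι → 𝕜} (hxy : x ⬝ᵥ y = 0) :
    ‖toEuclideanCLM (𝕜 := 𝕜) (skewMapping x y)‖ ≤ ‖toLp 2 y‖ / ‖toLp 2 x‖ := by
  refine ContinuousLinearMap.opNorm_le_bound _ (by positivity) fun v ↦ ?_
  have hxy' : ⟪toLp 2 x, toLp 2 (star y)⟫_𝕜 = 0 := by
    rw [EuclideanSpace.inner_toLp_toLp, star_dotProduct_star, hxy, star_zero]
  have hyx' : ⟪toLp 2 y, toLp 2 (star x)⟫_𝕜 = 0 := by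
    rw [EuclideanSpace.inner_toLp_toLp, star_dotProduct_star, dotProduct_comm, hxy, star_zero]
  have happly : toEuclideanCLM (𝕜 := 𝕜) (skewMapping x y) v = ((‖toLp 2 x‖ ^ 2)⁻¹ : 𝕜) •
      (⟪toLp 2 x, v⟫_𝕜 • toLp 2 y - ⟪toLp 2 (star y), v⟫_𝕜 • toLp 2 (star x)) := by
    ext i
    simp [skewMapping_mulVec, EuclideanSpace.inner_eq_star_dotProduct, dotProduct_comm]
  have hrank := norm_inner_smul_sub_inner_smul_le hxy' hyx' (EuclideanSpace.norm_toLp_star y).symm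
    (EuclideanSpace.norm_toLp_star x) v
  rw [EuclideanSpace.norm_toLp_star] at hrank
  rw [happly, norm_smul, norm_inv, norm_pow, RCLike.norm_ofReal, abs_norm]
  calc (‖toLp 2 x‖ ^ 2)⁻¹ * _ ≤ (‖toLp 2 x‖ ^ 2)⁻¹ * (‖toLp 2 x‖ * ‖toLp 2 y‖ * ‖v‖) := by
        gcongr
    _ = ‖toLp 2 y‖ / ‖toLp 2 x‖ * ‖v‖ := by
        rcases eq_or_ne ‖toLp 2 x‖ 0 with h | h
        · simp [h]
        · field_simp

end SkewMapping

theorem div_evNorm_le_specNorm {n : ℕ} {x y : Fin n → ℂ} (hx : x ≠ 0)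
    {Δ : Matrix (Fin n) (Fin n) ℂ} (hΔ : Δ *ᵥ x = y) : evNorm y / evNorm x ≤ specNorm Δ := by
  have hpos : 0 < evNorm x := by simpa [evNorm] using hx
  rw [div_le_iff₀ hpos, ← hΔ]
  simpa [evNorm, specNorm] using (toEuclideanCLM (𝕜 := ℂ) Δ).le_opNorm (toLp 2 x)

open Matrix in
/-- Skew-symmetric mapping theorem: for `x ≠ 0` there is a skew-symmetric `Δ` with
`Δx = y` iff `xᵀy = 0`, and then the minimal spectral norm of such `Δ` is `‖y‖/‖x‖`. -/
theorem skewSymmetric_mapping {n : ℕ} (x y : Fin n → ℂ) (hx : x ≠ 0) :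
    ((∃ Δ : Matrix (Fin n) (Fin n) ℂ, Δᵀ = -Δ ∧ Δ.mulVec x = y) ↔ x ⬝ᵥ y = 0) ∧
    (x ⬝ᵥ y = 0 →
      IsLeast {r : ℝ | ∃ Δ : Matrix (Fin n) (Fin n) ℂ,
          Δᵀ = -Δ ∧ Δ.mulVec x = y ∧ specNorm Δ = r}
        (evNorm y / evNorm x)) := by
  refine ⟨⟨fun ⟨Δ, hΔ, hΔx⟩ ↦ hΔx ▸ dotProduct_mulVec_self_eq_zero hΔ x, fun hxy ↦
    ⟨skewMapping x y, transpose_skewMapping x y, skewMapping_mulVec_self hx hxy⟩⟩, fun hxy ↦ ?_⟩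
  have hmap := skewMapping_mulVec_self hx hxy
  refine ⟨⟨skewMapping x y, transpose_skewMapping x y, hmap,
    le_antisymm (norm_toEuclideanCLM_skewMapping_le hxy) (div_evNorm_le_specNorm hx hmap)⟩, ?_⟩
  rintro r ⟨Δ, -, hΔx, rfl⟩
  exact div_evNorm_le_specNorm hx hΔx
end

section
/- Let x, y ∈ ℂⁿ with x ≠ 0. Then there exists a symmetric matrix Δ ∈ ℂ^{n×n} (Δᵀ = Δ) with Δx = y, and the minimal spectral norm over all such symmetric Δ equals ‖y‖/‖x‖. -/
open Matrix ComplexConjugate InnerProductSpace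

section InnerProductSpace

variable {𝕜 E : Type*} [RCLike 𝕜] [NormedAddCommGroup E] [InnerProductSpace 𝕜 E]

theorem norm_smul_add_smul_sq_le {p q : E} (hp : ‖p‖ ≤ 1) (hq : ‖q‖ ≤ 1) (hpq : ⟪p, q⟫_𝕜 = 0)
    (a b : 𝕜) : ‖a • p + b • q‖ ^ 2 ≤ ‖a‖ ^ 2 + ‖b‖ ^ 2 := by
  have hpyth := norm_add_sq_eq_norm_sq_add_norm_sq_of_inner_eq_zero (a • p) (b • q)
    (by rw [inner_smul_left, inner_smul_right, hpq, mul_zero, mul_zero])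
  rw [norm_smul, norm_smul] at hpyth
  have := mul_le_one₀ hp (norm_nonneg p) hp
  have := mul_le_one₀ hq (norm_nonneg q) hq
  nlinarith [sq_nonneg ‖a‖, sq_nonneg ‖b‖]

theorem norm_inner_sq_add_norm_inner_sq_le {p q : E} (hp : ‖p‖ = 1) (hq : ‖q‖ ≤ 1)
    (hpq : ⟪p, q⟫_𝕜 = 0) (z : E) : ‖⟪p, z⟫_𝕜‖ ^ 2 + ‖⟪q, z⟫_𝕜‖ ^ 2 ≤ ‖z‖ ^ 2 := by
  rcases eq_or_ne q 0 with rfl | hq0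
  · have := norm_inner_le_norm (𝕜 := 𝕜) p z
    rw [hp, one_mul] at this
    simpa using pow_le_pow_left₀ (norm_nonneg _) this 2
  set q' : E := (‖q‖⁻¹ : 𝕜) • q
  have hq' : ‖q'‖ = 1 := norm_smul_inv_norm hq0
  have hpq' : ⟪p, q'⟫_𝕜 = 0 := by rw [inner_smul_right, hpq, mul_zero]
  have horth : Orthonormal 𝕜 ![p, q'] := by
    rw [orthonormal_iff_ite]
    intro i j
    fin_cases i <;> fin_cases j <;> simp [hp, hq', hpq', inner_eq_zero_symm.mp hpq']
  have hbessel := horth.sum_inner_products_le (s := Finset.univ) z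
  simp only [Fin.sum_univ_two, Matrix.cons_val_zero, Matrix.cons_val_one] at hbessel
  have hq_eq : ‖⟪q, z⟫_𝕜‖ = ‖q‖ * ‖⟪q', z⟫_𝕜‖ := by
    rw [inner_smul_left, norm_mul, RCLike.norm_conj, norm_inv, RCLike.norm_ofReal, abs_norm,
      mul_inv_cancel_left₀ (norm_ne_zero_iff.mpr hq0)]
  have : ‖⟪q, z⟫_𝕜‖ ≤ ‖⟪q', z⟫_𝕜‖ := by
    rw [hq_eq]
    exact mul_le_of_le_one_left (norm_nonneg _) hq
  nlinarith [norm_nonneg ⟪q, z⟫_𝕜]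

end InnerProductSpace

theorem sq_norm_add_sq_norm_rotation (c : ℂ) (σ : ℝ) (a b : ℂ) :
    ‖c * a + σ * b‖ ^ 2 + ‖σ * a - conj c * b‖ ^ 2 = (‖c‖ ^ 2 + σ ^ 2) * (‖a‖ ^ 2 + ‖b‖ ^ 2) := by
  simp only [Complex.sq_norm, Complex.normSq_apply, Complex.add_re, Complex.add_im,
    Complex.sub_re, Complex.sub_im, Complex.mul_re, Complex.mul_im, Complex.ofReal_re,
    Complex.ofReal_im, Complex.conj_re, Complex.conj_im]
  ring

theorem evNorm_smul {n : ℕ} (c : ℂ) (v : Fin n → ℂ) : evNorm (c • v) = ‖c‖ * evNorm v := by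
  simp [evNorm, WithLp.toLp_smul, norm_smul]

theorem evNorm_star {n : ℕ} (v : Fin n → ℂ) : evNorm (star v) = evNorm v := by
  simp [evNorm, EuclideanSpace.norm_eq]

theorem evNorm_nonneg {n : ℕ} (v : Fin n → ℂ) : 0 ≤ evNorm v := norm_nonneg _

theorem evNorm_pos {n : ℕ} {v : Fin n → ℂ} (hv : v ≠ 0) : 0 < evNorm v := by
  simpa [evNorm] using hv

theorem star_dotProduct_self {n : ℕ} (v : Fin n → ℂ) : star v ⬝ᵥ v = (evNorm v : ℂ) ^ 2 := by
  rw [dotProduct_comm, ← EuclideanSpace.inner_toLp_toLp]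
  exact inner_self_eq_norm_sq_to_K _

theorem evNorm_mulVec_le {n : ℕ} (A : Matrix (Fin n) (Fin n) ℂ) (v : Fin n → ℂ) :
    evNorm (A *ᵥ v) ≤ specNorm A * evNorm v :=
  (toEuclideanCLM (𝕜 := ℂ) A).le_opNorm (WithLp.toLp 2 v)

theorem specNorm_le_of_evNorm_mulVec_le {n : ℕ} {A : Matrix (Fin n) (Fin n) ℂ} {C : ℝ}
    (hC : 0 ≤ C) (h : ∀ v, evNorm (A *ᵥ v) ≤ C * evNorm v) : specNorm A ≤ C :=
  ContinuousLinearMap.opNorm_le_bound _ hC fun v => h (WithLp.ofLp v)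

theorem specNorm_smul {n : ℕ} (c : ℂ) (A : Matrix (Fin n) (Fin n) ℂ) :
    specNorm (c • A) = ‖c‖ * specNorm A := by
  rw [specNorm, specNorm, map_smul, norm_smul]

/-- In the basis `p, q` this is the symmetric block `[[c, σ], [σ, -c̄]]`, whose columns are
orthogonal of length `√(‖c‖² + σ²)`. -/
def symmetricRankTwo {m : Type*} (c : ℂ) (σ : ℝ) (p q : m → ℂ) : Matrix m m ℂ :=
  c • vecMulVec p p + (σ : ℂ) • (vecMulVec p q + vecMulVec q p) - conj c • vecMulVec q q

theorem transpose_symmetricRankTwo {m : Type*} (c : ℂ) (σ : ℝ) (p q : m → ℂ) :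
    (symmetricRankTwo c σ p q)ᵀ = symmetricRankTwo c σ p q := by
  simp only [symmetricRankTwo, transpose_sub, transpose_add, transpose_smul, transpose_vecMulVec,
    add_comm (vecMulVec q p)]

theorem symmetricRankTwo_mulVec {m : Type*} [Fintype m] (c : ℂ) (σ : ℝ) (p q z : m → ℂ) :
    symmetricRankTwo c σ p q *ᵥ z =
      (c * (p ⬝ᵥ z) + σ * (q ⬝ᵥ z)) • p + (σ * (p ⬝ᵥ z) - conj c * (q ⬝ᵥ z)) • q := by
  simp only [symmetricRankTwo, sub_mulVec, add_mulVec, smul_mulVec, vecMulVec_mulVec,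
    op_smul_eq_smul, smul_smul, add_smul, sub_smul, smul_add]
  abel

theorem specNorm_symmetricRankTwo_le {n : ℕ} {c : ℂ} {σ r : ℝ} {p q : Fin n → ℂ}
    (hp : evNorm p = 1) (hq : evNorm q ≤ 1) (hpq : star p ⬝ᵥ q = 0)
    (hr : ‖c‖ ^ 2 + σ ^ 2 = r ^ 2) (hr0 : 0 ≤ r) :
    specNorm (symmetricRankTwo c σ p q) ≤ r := by
  refine specNorm_le_of_evNorm_mulVec_le hr0 fun z => ?_
  set a := p ⬝ᵥ z
  set b := q ⬝ᵥ z
  have hout : evNorm ((c * a + σ * b) • p + (σ * a - conj c * b) • q) ^ 2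
      ≤ ‖c * a + σ * b‖ ^ 2 + ‖σ * a - conj c * b‖ ^ 2 := by
    have := norm_smul_add_smul_sq_le (p := WithLp.toLp 2 p) (q := WithLp.toLp 2 q) hp.le hq
      (by rwa [EuclideanSpace.inner_toLp_toLp, dotProduct_comm])
      (c * a + σ * b) (σ * a - conj c * b)
    simpa [evNorm] using this
  have hin : ‖a‖ ^ 2 + ‖b‖ ^ 2 ≤ evNorm z ^ 2 := by
    have := norm_inner_sq_add_norm_inner_sq_le (p := WithLp.toLp 2 (star p))
      (q := WithLp.toLp 2 (star q)) (by rwa [← evNorm_star] at hp) (by rwa [← evNorm_star] at hq)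
      (by rw [EuclideanSpace.inner_toLp_toLp, star_dotProduct_star, hpq, star_zero])
      (WithLp.toLp 2 z)
    simpa [a, b, evNorm, EuclideanSpace.inner_toLp_toLp, dotProduct_comm] using this
  rw [sq_norm_add_sq_norm_rotation, hr] at hout
  rw [symmetricRankTwo_mulVec]
  refine (pow_le_pow_iff_left₀ (evNorm_nonneg _) (mul_nonneg hr0 (evNorm_nonneg z))
    two_ne_zero).mp ?_
  calc _ ≤ _ := hout
    _ ≤ r ^ 2 * evNorm z ^ 2 := by gcongr
    _ = _ := by ring

theorem exists_symm_mulVec_eq_of_evNorm_eq_one {n : ℕ} {x : Fin n → ℂ} (hx : evNorm x = 1)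
    (y : Fin n → ℂ) :
    ∃ Δ : Matrix (Fin n) (Fin n) ℂ, Δᵀ = Δ ∧ Δ *ᵥ x = y ∧ specNorm Δ ≤ evNorm y := by
  set c := y ⬝ᵥ x
  set w := y - c • star x
  set σ := evNorm w
  set u := (σ : ℂ)⁻¹ • w
  have hxx : star x ⬝ᵥ x = 1 := by rw [star_dotProduct_self, hx, Complex.ofReal_one, one_pow]
  have hwx : w ⬝ᵥ x = 0 := by
    rw [sub_dotProduct, smul_dotProduct, hxx, smul_eq_mul, mul_one, sub_self]
  -- `u = 0` if `w = 0`, as `(0 : ℂ)⁻¹ = 0`.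
  have hσu : (σ : ℂ) • u = w := by
    rcases eq_or_ne w 0 with hw | hw
    · simp [u, hw]
    · rw [smul_smul, mul_inv_cancel₀ (Complex.ofReal_ne_zero.mpr (evNorm_pos hw).ne'), one_smul]
  have hux : u ⬝ᵥ x = 0 := by rw [smul_dotProduct, hwx, smul_zero]
  have hu : evNorm u ≤ 1 := by
    rw [evNorm_smul, norm_inv, Complex.norm_real, Real.norm_of_nonneg (evNorm_nonneg w)]
    exact inv_mul_le_one
  have hy : ‖c‖ ^ 2 + σ ^ 2 = evNorm y ^ 2 := by
    have h := norm_add_sq_eq_norm_sq_add_norm_sq_of_inner_eq_zero (𝕜 := ℂ)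
      (WithLp.toLp 2 (c • star x)) (WithLp.toLp 2 w)
      (by rw [EuclideanSpace.inner_toLp_toLp, star_smul, star_star, dotProduct_smul, hwx,
        smul_zero])
    rw [← WithLp.toLp_add, add_sub_cancel] at h
    change evNorm y * evNorm y = evNorm (c • star x) * evNorm (c • star x) + σ * σ at h
    rw [evNorm_smul, evNorm_star, hx] at h
    linear_combination -h
  refine ⟨symmetricRankTwo c σ (star x) u, transpose_symmetricRankTwo c σ (star x) u, ?_,
    specNorm_symmetricRankTwo_le (by rwa [evNorm_star]) hu
      (by rw [star_star, dotProduct_comm, hux]) hy (evNorm_nonneg y)⟩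
  rw [symmetricRankTwo_mulVec, hxx, hux]
  simp only [mul_one, mul_zero, add_zero, sub_zero]
  rw [hσu, add_sub_cancel]

theorem evNorm_mulVec_div_le_specNorm {n : ℕ} {x : Fin n → ℂ} (hx : x ≠ 0)
    (A : Matrix (Fin n) (Fin n) ℂ) : evNorm (A *ᵥ x) / evNorm x ≤ specNorm A :=
  (div_le_iff₀ (evNorm_pos hx)).mpr (evNorm_mulVec_le A x)

theorem exists_symm_mulVec_eq {n : ℕ} {x : Fin n → ℂ} (hx : x ≠ 0) (y : Fin n → ℂ) :
    ∃ Δ : Matrix (Fin n) (Fin n) ℂ, Δᵀ = Δ ∧ Δ *ᵥ x = y ∧ specNorm Δ ≤ evNorm y / evNorm x := by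
  have hN := evNorm_pos hx
  obtain ⟨Δ, hsymm, hΔx, hΔ⟩ := exists_symm_mulVec_eq_of_evNorm_eq_one (x := (evNorm x : ℂ)⁻¹ • x)
    (by rw [evNorm_smul, norm_inv, Complex.norm_real, Real.norm_of_nonneg hN.le,
      inv_mul_cancel₀ hN.ne']) y
  refine ⟨(evNorm x : ℂ)⁻¹ • Δ, by rw [transpose_smul, hsymm], ?_, ?_⟩
  · rwa [smul_mulVec, ← mulVec_smul]
  · rw [specNorm_smul, norm_inv, Complex.norm_real, Real.norm_of_nonneg hN.le, div_eq_inv_mul]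
    exact mul_le_mul_of_nonneg_left hΔ (inv_nonneg.mpr hN.le)

open Matrix in
/-- Symmetric mapping theorem: for `x ≠ 0` there is always a complex symmetric `Δ` with
`Δx = y`, and the minimal spectral norm over all such `Δ` is `‖y‖/‖x‖`. -/
theorem symmetric_mapping {n : ℕ} (x y : Fin n → ℂ) (hx : x ≠ 0) :
    IsLeast {r : ℝ | ∃ Δ : Matrix (Fin n) (Fin n) ℂ,
        Δᵀ = Δ ∧ Δ.mulVec x = y ∧ specNorm Δ = r}
      (evNorm y / evNorm x) := by
  obtain ⟨Δ, hsymm, rfl, hΔ⟩ := exists_symm_mulVec_eq hx y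
  refine ⟨⟨Δ, hsymm, rfl, le_antisymm hΔ (evNorm_mulVec_div_le_specNorm hx Δ)⟩, ?_⟩
  rintro r ⟨Δ', -, hΔ'x, rfl⟩
  rw [← hΔ'x]
  exact evNorm_mulVec_div_le_specNorm hx Δ'
end

section
/- Let G(z) = Σ_{p=0}^d z^p A_p + Σ_{j=1}^k w_j(z) E_j be an n×n rational matrix polynomial and λ ∈ ℂ with all w_j(λ) defined. Fix x ∈ ℂⁿ \ {0}. Then the infimum of ‖(ΔA₀,…,ΔA_d,ΔE₁,…,ΔE_k)‖ over all tuples of n×n matrices with (Σ_p λ^p (A_p − ΔA_p) + Σ_j w_j(λ)(E_j − ΔE_j))x = 0 equals ‖G(λ)x‖ / (‖x‖ · ‖(1, λ, …, λ^d, w₁(λ), …, w_k(λ))‖), and this infimum is attained. -/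
/-!
Write `G(λ) = ∑ᵢ cᵢ Tᵢ` with `c = (1, λ, …, λ^d, w₁(λ), …, w_k(λ))` and `y = G(λ)x`. If the
perturbed evaluation kills `x`, then `y = (∑ᵢ cᵢ Δᵢ) x`, so the triangle inequality and
Cauchy–Schwarz give `‖y‖ ≤ ‖c‖ · √(∑ᵢ ‖Δᵢ‖²) · ‖x‖`. The bound is attained by the rank-one
perturbations `Δᵢ = c̄ᵢ y x* / (‖c‖² ‖x‖²)`; when `y = 0` no perturbation is needed at all.
-/

open Finset InnerProductSpace

section Normed

variable {𝕜 E F G ι : Type*} [Fintype ι]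

theorem sum_norm_sq_pos [NormedAddCommGroup G] {c : ι → G} (hc : c ≠ 0) :
    0 < ∑ i, ‖c i‖ ^ 2 := by
  obtain ⟨i, hi⟩ := Function.ne_iff.mp hc
  exact sum_pos' (fun j _ => by positivity) ⟨i, mem_univ _, by positivity⟩

variable [NontriviallyNormedField 𝕜] [SeminormedAddCommGroup E] [NormedSpace 𝕜 E]
  [SeminormedAddCommGroup F] [NormedSpace 𝕜 F]

theorem norm_sum_smul_apply_le (c : ι → 𝕜) (Δ : ι → E →L[𝕜] F) (x : E) :
    ‖(∑ i, c i • Δ i) x‖ ≤ √(∑ i, ‖c i‖ ^ 2) * √(∑ i, ‖Δ i‖ ^ 2) * ‖x‖ := by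
  refine (ContinuousLinearMap.le_opNorm _ x).trans (mul_le_mul_of_nonneg_right ?_ (norm_nonneg x))
  calc ‖∑ i, c i • Δ i‖ ≤ ∑ i, ‖c i‖ * ‖Δ i‖ := norm_sum_le_of_le _ fun i _ => (norm_smul _ _).le
    _ ≤ √(∑ i, ‖c i‖ ^ 2) * √(∑ i, ‖Δ i‖ ^ 2) := Real.sum_mul_le_sqrt_mul_sqrt _ _ _

end Normed

section InnerProduct

variable {𝕜 E F ι : Type*} [RCLike 𝕜] [NormedAddCommGroup E] [InnerProductSpace 𝕜 E]
  [NormedAddCommGroup F] [InnerProductSpace 𝕜 F] [Fintype ι]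

noncomputable def minimalPerturbation (c : ι → 𝕜) (y : F) (x : E) : ι → E →L[𝕜] F :=
  fun i => (starRingEnd 𝕜 (c i) / ((∑ j, ‖c j‖ ^ 2 : ℝ) * ‖x‖ ^ 2 : 𝕜)) • rankOne 𝕜 y x

theorem sum_smul_minimalPerturbation_apply {c : ι → 𝕜} {x : E} (y : F) (hc : c ≠ 0)
    (hx : x ≠ 0) : (∑ i, c i • minimalPerturbation c y x i) x = y := by
  simp only [minimalPerturbation, smul_smul, ← sum_smul, FunLike.coe_smul, Pi.smul_apply,
    rankOne_apply, inner_self_eq_norm_sq_to_K, mul_div_assoc', ← sum_div, RCLike.mul_conj]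
  have hc' : ∑ j, (‖c j‖ : 𝕜) ^ 2 ≠ 0 := by exact_mod_cast (sum_norm_sq_pos hc).ne'
  have hx' : (‖x‖ : 𝕜) ≠ 0 := by exact_mod_cast norm_ne_zero_iff.mpr hx
  convert one_smul 𝕜 y
  push_cast
  field_simp

theorem sqrt_sum_norm_minimalPerturbation_sq {c : ι → 𝕜} {x : E} (y : F) (hc : c ≠ 0)
    (hx : x ≠ 0) :
    √(∑ i, ‖minimalPerturbation c y x i‖ ^ 2) = ‖y‖ / (‖x‖ * √(∑ i, ‖c i‖ ^ 2)) := by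
  have hc' := sum_norm_sq_pos hc
  have hx' : 0 < ‖x‖ := norm_pos_iff.mpr hx
  have norm_eq (i : ι) :
      ‖minimalPerturbation c y x i‖ = ‖c i‖ * (‖y‖ / ((∑ j, ‖c j‖ ^ 2) * ‖x‖)) := by
    rw [minimalPerturbation, norm_smul, norm_rankOne, norm_div, RCLike.norm_conj]
    norm_cast
    rw [abs_of_pos (by positivity)]
    field_simp
  simp only [norm_eq, mul_pow, ← sum_mul]
  rw [Real.sqrt_mul hc'.le, Real.sqrt_sq (by positivity), eq_div_iff (by positivity)]
  field_simp
  rw [Real.sq_sqrt hc'.le, mul_comm]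

theorem isLeast_backwardError (c : ι → 𝕜) (T : ι → E →L[𝕜] F) (x : E) :
    IsLeast {r : ℝ | ∃ Δ : ι → E →L[𝕜] F,
        (∑ i, c i • (T i - Δ i)) x = 0 ∧ r = √(∑ i, ‖Δ i‖ ^ 2)}
      (‖(∑ i, c i • T i) x‖ / (‖x‖ * √(∑ i, ‖c i‖ ^ 2))) := by
  set y := (∑ i, c i • T i) x
  have residual (Δ : ι → E →L[𝕜] F) :
      (∑ i, c i • (T i - Δ i)) x = y - (∑ i, c i • Δ i) x := by
    simp only [smul_sub, sum_sub_distrib, sub_apply, y]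
  constructor
  · by_cases hy : y = 0
    · exact ⟨0, by rw [residual, hy]; simp, by simp [hy]⟩
    have hx : x ≠ 0 := by rintro rfl; exact hy (map_zero _)
    have hc : c ≠ 0 := by rintro rfl; exact hy (by simp [y])
    exact ⟨minimalPerturbation c y x,
      by rw [residual, sum_smul_minimalPerturbation_apply y hc hx, sub_self],
      (sqrt_sum_norm_minimalPerturbation_sq y hc hx).symm⟩
  · rintro _ ⟨Δ, hΔ, rfl⟩
    rw [residual, sub_eq_zero] at hΔ
    refine div_le_of_le_mul₀ (by positivity) (by positivity) ?_
    calc ‖y‖ ≤ √(∑ i, ‖c i‖ ^ 2) * √(∑ i, ‖Δ i‖ ^ 2) * ‖x‖ := hΔ ▸ norm_sum_smul_apply_le c Δ x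
      _ = √(∑ i, ‖Δ i‖ ^ 2) * (‖x‖ * √(∑ i, ‖c i‖ ^ 2)) := by ring

end InnerProduct

theorem isLeast_matrix_backwardError {ι : Type*} [Fintype ι] {n : ℕ} (c : ι → ℂ)
    (M : ι → Matrix (Fin n) (Fin n) ℂ) (x : Fin n → ℂ) :
    IsLeast {r : ℝ | ∃ Δ : ι → Matrix (Fin n) (Fin n) ℂ,
        (∑ i, c i • (M i - Δ i)).mulVec x = 0 ∧ r = √(∑ i, specNorm (Δ i) ^ 2)}
      (evNorm ((∑ i, c i • M i).mulVec x) / (evNorm x * √(∑ i, ‖c i‖ ^ 2))) := by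
  let φ := Matrix.toEuclideanCLM (n := Fin n) (𝕜 := ℂ)
  have hφ (N : ι → Matrix (Fin n) (Fin n) ℂ) :
      (∑ i, c i • φ (N i)) (WithLp.toLp 2 x) = WithLp.toLp 2 ((∑ i, c i • N i).mulVec x) := by
    simp only [← Matrix.toEuclideanCLM_toLp, map_sum, map_smul, φ]
  have hφ_surj : Function.Surjective fun (Δ : ι → Matrix (Fin n) (Fin n) ℂ) i => φ (Δ i) :=
    fun Δ => ⟨fun i => φ.symm (Δ i), by simp⟩
  convert isLeast_backwardError c (fun i => φ (M i)) (WithLp.toLp 2 x) using 1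
  · ext r
    refine (hφ_surj.exists.trans (exists_congr fun Δ => and_congr ?_ Iff.rfl)).symm
    simp only [← map_sub, hφ, WithLp.toLp_eq_zero]
  · simp only [evNorm, hφ]
    rfl

open Matrix in
theorem eigenpair_backward_error_general {n d k : ℕ}
    (A : Fin (d + 1) → Matrix (Fin n) (Fin n) ℂ)
    (E : Fin k → Matrix (Fin n) (Fin n) ℂ)
    (lam : ℂ) (w : Fin k → ℂ) (x : Fin n → ℂ) :
    IsLeast {r : ℝ |
        ∃ (ΔA : Fin (d + 1) → Matrix (Fin n) (Fin n) ℂ)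
          (ΔE : Fin k → Matrix (Fin n) (Fin n) ℂ),
          (∑ p : Fin (d + 1), lam ^ (p : ℕ) • (A p - ΔA p)
              + ∑ j, w j • (E j - ΔE j)).mulVec x = 0 ∧
          r = Real.sqrt (∑ p : Fin (d + 1), specNorm (ΔA p) ^ 2
              + ∑ j, specNorm (ΔE j) ^ 2)}
      (evNorm ((∑ p : Fin (d + 1), lam ^ (p : ℕ) • A p + ∑ j, w j • E j).mulVec x) /
        (evNorm x *
          Real.sqrt (∑ p : Fin (d + 1), ‖lam ^ (p : ℕ)‖ ^ 2
            + ∑ j, ‖w j‖ ^ 2))) := by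
  have h := isLeast_matrix_backwardError (Sum.elim (fun p : Fin (d + 1) => lam ^ (p : ℕ)) w)
    (Sum.elim A E) x
  simp only [Fintype.sum_sum_type, Sum.exists_sum] at h
  exact h

open Matrix in
/-- Eigenpair backward error: for fixed `x ≠ 0`, the minimal tuple norm of perturbations
`(ΔA₀,…,ΔA_d,ΔE₁,…,ΔE_k)` making `x` a null vector of the perturbed evaluation at `λ`
equals `‖G(λ)x‖/(‖x‖·‖(1,λ,…,λ^d,w₁(λ),…,w_k(λ))‖)`, and it is attained. -/
theorem eigenpair_backward_error {n d k : ℕ}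
    (A : Fin (d + 1) → Matrix (Fin n) (Fin n) ℂ)
    (E : Fin k → Matrix (Fin n) (Fin n) ℂ)
    (lam : ℂ) (w : Fin k → ℂ) (x : Fin n → ℂ) (hx : x ≠ 0) :
    IsLeast {r : ℝ |
        ∃ (ΔA : Fin (d + 1) → Matrix (Fin n) (Fin n) ℂ)
          (ΔE : Fin k → Matrix (Fin n) (Fin n) ℂ),
          (∑ p : Fin (d + 1), lam ^ (p : ℕ) • (A p - ΔA p)
              + ∑ j, w j • (E j - ΔE j)).mulVec x = 0 ∧
          r = Real.sqrt (∑ p : Fin (d + 1), specNorm (ΔA p) ^ 2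
              + ∑ j, specNorm (ΔE j) ^ 2)}
      (evNorm ((∑ p : Fin (d + 1), lam ^ (p : ℕ) • A p + ∑ j, w j • E j).mulVec x) /
        (evNorm x *
          Real.sqrt (∑ p : Fin (d + 1), ‖lam ^ (p : ℕ)‖ ^ 2
            + ∑ j, ‖w j‖ ^ 2))) :=
  eigenpair_backward_error_general A E lam w x
end

section
/- Let G(z) = Σ_{p=0}^d z^p A_p + Σ_{j=1}^k w_j(z) E_j be an n×n rational matrix polynomial and λ ∈ ℂ with all w_j(λ) defined. Then the unstructured eigenvalue backward error η(G,λ), defined as the infimum of ‖(ΔA₀,…,ΔA_d,ΔE₁,…,ΔE_k)‖ over all matrix tuples making det(Σ_p λ^p(A_p − ΔA_p) + Σ_j w_j(λ)(E_j − ΔE_j)) = 0, equals σ_min(G(λ)) / ‖(1, λ, …, λ^d, w₁(λ), …, w_k(λ))‖. -/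
/-- The smallest singular value of a complex matrix. -/
noncomputable def sigmaMin {n : ℕ} (A : Matrix (Fin n) (Fin n) ℂ) : ℝ :=
  sInf {r : ℝ | ∃ x : Fin n → ℂ, evNorm x = 1 ∧ r = evNorm (A.mulVec x)}

/-!
If `G - ∑ cᵢ Δᵢ` is singular then `σ_min(G) ≤ ‖∑ cᵢ Δᵢ‖ ≤ ‖c‖ ‖Δ‖` by the triangle and
Cauchy–Schwarz inequalities. Conversely, for a unit vector `x` minimising `‖G x‖`, the rank-one
matrix `B = (G x) xᴴ` has norm `σ_min(G)` and `G - B` kills `x`; splitting `B` as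
`Δᵢ = c̄ᵢ B / ‖c‖²` gives `∑ cᵢ Δᵢ = B` with `‖Δ‖ = ‖B‖ / ‖c‖`.
-/

open Matrix InnerProductSpace WithLp Finset ComplexConjugate
open scoped Matrix.Norms.L2Operator

section MinNormSplit

variable {ι 𝕜 V : Type*} [Fintype ι] [RCLike 𝕜] [NormedAddCommGroup V] [NormedSpace 𝕜 V]

theorem norm_sum_smul_le_sqrt_mul_sqrt (c : ι → 𝕜) (v : ι → V) :
    ‖∑ i, c i • v i‖ ≤ √(∑ i, ‖c i‖ ^ 2) * √(∑ i, ‖v i‖ ^ 2) :=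
  calc ‖∑ i, c i • v i‖ ≤ ∑ i, ‖c i‖ * ‖v i‖ :=
        norm_sum_le_of_le _ fun i _ => (norm_smul (c i) (v i)).le
    _ ≤ _ := Real.sum_mul_le_sqrt_mul_sqrt _ _ _

/-- The least-norm family `Δ` with `∑ i, c i • Δ i = B`. -/
noncomputable def minNormSplit (c : ι → 𝕜) (B : V) (i : ι) : V :=
  (conj (c i) / ((∑ j, ‖c j‖ ^ 2 : ℝ) : 𝕜)) • B

theorem sum_smul_minNormSplit {c : ι → 𝕜} (hc : c ≠ 0) (B : V) :
    ∑ i, c i • minNormSplit c B i = B := by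
  have hs : (∑ j, ‖c j‖ ^ 2 : ℝ) ≠ 0 := by
    obtain ⟨i, hi⟩ := Function.ne_iff.mp hc
    exact (Finset.sum_pos' (fun j _ => by positivity) ⟨i, mem_univ i, by positivity⟩).ne'
  simp_rw [minNormSplit, smul_smul, ← Finset.sum_smul, mul_div_assoc', ← Finset.sum_div,
    RCLike.mul_conj, ← RCLike.ofReal_pow, ← RCLike.ofReal_sum]
  rw [div_self (RCLike.ofReal_ne_zero.mpr hs), one_smul]

theorem sqrt_sum_norm_minNormSplit_sq (c : ι → 𝕜) (B : V) :
    √(∑ i, ‖minNormSplit c B i‖ ^ 2) = ‖B‖ / √(∑ i, ‖c i‖ ^ 2) := by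
  set s := ∑ i, ‖c i‖ ^ 2
  have hs : 0 ≤ s := by positivity
  have hterm (i : ι) : ‖minNormSplit c B i‖ ^ 2 = ‖c i‖ ^ 2 * (‖B‖ ^ 2 / s ^ 2) := by
    rw [minNormSplit, norm_smul, norm_div, RCLike.norm_conj, RCLike.norm_ofReal, abs_of_nonneg hs]
    ring
  have hsum : s * (‖B‖ ^ 2 / s ^ 2) = (‖B‖ / √s) ^ 2 := by
    rw [div_pow, Real.sq_sqrt hs]
    rcases hs.eq_or_lt with h | h
    · simp [← h]
    · field_simp
  rw [Finset.sum_congr rfl fun i _ => hterm i, ← Finset.sum_mul, hsum, Real.sqrt_sq (by positivity)]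

end MinNormSplit

section Singular

variable {𝕜 m : Type*} [RCLike 𝕜] [Fintype m] [DecidableEq m]

theorem Matrix.det_eq_zero_iff_exists_norm_eq_one_toEuclideanCLM_apply_eq_zero
    (A : Matrix m m 𝕜) :
    A.det = 0 ↔ ∃ x : EuclideanSpace 𝕜 m, ‖x‖ = 1 ∧ toEuclideanCLM (𝕜 := 𝕜) A x = 0 := by
  rw [← exists_mulVec_eq_zero_iff]
  constructor
  · rintro ⟨v, hv, hAv⟩
    have hv' : toLp 2 v ≠ 0 := by simpa using hv
    refine ⟨(‖toLp 2 v‖⁻¹ : 𝕜) • toLp 2 v, norm_smul_inv_norm hv', ?_⟩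
    rw [map_smul, toEuclideanCLM_toLp, hAv, toLp_zero, smul_zero]
  · rintro ⟨x, hx, hAx⟩
    refine ⟨ofLp x, ?_, ?_⟩
    · simpa using ne_zero_of_norm_ne_zero (hx ▸ one_ne_zero)
    · rw [← ofLp_toEuclideanCLM, hAx, ofLp_zero]

/-- `toEuclideanCLM.symm (rankOne 𝕜 (A x) x)` is the rank-one matrix `(A x) xᴴ`. -/
theorem Matrix.det_sub_symm_rankOne_eq_zero (A : Matrix m m 𝕜) {x : EuclideanSpace 𝕜 m}
    (hx : ‖x‖ = 1) :
    (A - (toEuclideanCLM (𝕜 := 𝕜)).symm (rankOne 𝕜 (toEuclideanCLM (𝕜 := 𝕜) A x) x)).det = 0 :=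
  (det_eq_zero_iff_exists_norm_eq_one_toEuclideanCLM_apply_eq_zero _).mpr
    ⟨x, hx, by simp [inner_self_eq_norm_sq_to_K, hx]⟩

end Singular

section SigmaMin

variable {n : ℕ}

theorem specNorm_eq_norm (A : Matrix (Fin n) (Fin n) ℂ) : specNorm A = ‖A‖ := rfl

theorem sigmaMin_eq_sInf_image (A : Matrix (Fin n) (Fin n) ℂ) :
    sigmaMin A = sInf ((‖toEuclideanCLM (𝕜 := ℂ) A ·‖) '' Metric.sphere 0 1) := by
  rw [sigmaMin]
  congr 1
  ext r
  constructor
  · rintro ⟨x, hx, rfl⟩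
    exact ⟨toLp 2 x, by simpa [evNorm] using hx, rfl⟩
  · rintro ⟨x, hx, rfl⟩
    exact ⟨ofLp x, by simpa [evNorm] using hx, rfl⟩

theorem sigmaMin_le_norm_toEuclideanCLM_apply (A : Matrix (Fin n) (Fin n) ℂ)
    {x : EuclideanSpace ℂ (Fin n)} (hx : ‖x‖ = 1) : sigmaMin A ≤ ‖toEuclideanCLM (𝕜 := ℂ) A x‖ := by
  rw [sigmaMin_eq_sInf_image]
  exact csInf_le ⟨0, by rintro _ ⟨y, -, rfl⟩; positivity⟩ ⟨x, by simpa using hx, rfl⟩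

theorem exists_norm_toEuclideanCLM_apply_eq_sigmaMin [NeZero n] (A : Matrix (Fin n) (Fin n) ℂ) :
    ∃ x : EuclideanSpace ℂ (Fin n), ‖x‖ = 1 ∧ ‖toEuclideanCLM (𝕜 := ℂ) A x‖ = sigmaMin A := by
  rw [sigmaMin_eq_sInf_image]
  have hcompact := (isCompact_sphere (0 : EuclideanSpace ℂ (Fin n)) 1).image
    (toEuclideanCLM (𝕜 := ℂ) A).continuous.norm
  obtain ⟨x, hx, hmin⟩ := hcompact.sInf_mem ((NormedSpace.sphere_nonempty.mpr zero_le_one).image _)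
  exact ⟨x, by simpa using hx, hmin⟩

theorem sigmaMin_fin_zero (A : Matrix (Fin 0) (Fin 0) ℂ) : sigmaMin A = 0 := by
  rw [sigmaMin_eq_sInf_image, Metric.sphere_eq_empty_of_subsingleton one_ne_zero, Set.image_empty,
    Real.sInf_empty]

theorem sigmaMin_le_norm_of_det_sub_eq_zero {G M : Matrix (Fin n) (Fin n) ℂ}
    (h : (G - M).det = 0) : sigmaMin G ≤ ‖M‖ := by
  obtain ⟨x, hx, hGMx⟩ := (det_eq_zero_iff_exists_norm_eq_one_toEuclideanCLM_apply_eq_zero _).mp h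
  rw [map_sub, _root_.sub_apply, sub_eq_zero] at hGMx
  calc sigmaMin G ≤ ‖toEuclideanCLM (𝕜 := ℂ) G x‖ := sigmaMin_le_norm_toEuclideanCLM_apply G hx
    _ = ‖toEuclideanCLM (𝕜 := ℂ) M x‖ := by rw [hGMx]
    _ ≤ ‖M‖ := by
      simpa [hx, l2_opNorm_toEuclideanCLM] using (toEuclideanCLM (𝕜 := ℂ) M).le_opNorm x

end SigmaMin

section BackwardError

variable {ι : Type*} [Fintype ι] {n : ℕ}

/-- With `c = (1, λ, …, λ^d, w₁(λ), …, w_k(λ))` and `M = (A₀, …, A_d, E₁, …, E_k)` this is the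
paper's `η(G, λ)`; `‖·‖` is the spectral norm. -/
noncomputable def backwardError (c : ι → ℂ) (M : ι → Matrix (Fin n) (Fin n) ℂ) : ℝ :=
  sInf {r : ℝ | ∃ Δ : ι → Matrix (Fin n) (Fin n) ℂ,
    (∑ i, c i • (M i - Δ i)).det = 0 ∧ r = √(∑ i, ‖Δ i‖ ^ 2)}

theorem sigmaMin_div_le_of_det_eq_zero {c : ι → ℂ} {M Δ : ι → Matrix (Fin n) (Fin n) ℂ}
    (h : (∑ i, c i • (M i - Δ i)).det = 0) :
    sigmaMin (∑ i, c i • M i) / √(∑ i, ‖c i‖ ^ 2) ≤ √(∑ i, ‖Δ i‖ ^ 2) := by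
  simp only [smul_sub, sum_sub_distrib] at h
  refine div_le_of_le_mul₀ (by positivity) (by positivity) ?_
  calc sigmaMin (∑ i, c i • M i) ≤ ‖∑ i, c i • Δ i‖ := sigmaMin_le_norm_of_det_sub_eq_zero h
    _ ≤ √(∑ i, ‖c i‖ ^ 2) * √(∑ i, ‖Δ i‖ ^ 2) := norm_sum_smul_le_sqrt_mul_sqrt c Δ
    _ = _ := mul_comm _ _

theorem exists_det_eq_zero_sqrt_eq_sigmaMin_div [NeZero n] {c : ι → ℂ} (hc : c ≠ 0)
    (M : ι → Matrix (Fin n) (Fin n) ℂ) :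
    ∃ Δ : ι → Matrix (Fin n) (Fin n) ℂ, (∑ i, c i • (M i - Δ i)).det = 0 ∧
      √(∑ i, ‖Δ i‖ ^ 2) = sigmaMin (∑ i, c i • M i) / √(∑ i, ‖c i‖ ^ 2) := by
  set G := ∑ i, c i • M i
  obtain ⟨x, hx, hGx⟩ := exists_norm_toEuclideanCLM_apply_eq_sigmaMin G
  set B := (toEuclideanCLM (𝕜 := ℂ)).symm (rankOne ℂ (toEuclideanCLM (𝕜 := ℂ) G x) x)
  have hB : ‖B‖ = sigmaMin G := by
    rw [← l2_opNorm_toEuclideanCLM, StarAlgEquiv.apply_symm_apply, norm_rankOne, hx, mul_one, hGx]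
  refine ⟨minNormSplit c B, ?_, by rw [sqrt_sum_norm_minNormSplit_sq, hB]⟩
  simp only [smul_sub, sum_sub_distrib, sum_smul_minNormSplit hc]
  exact det_sub_symm_rankOne_eq_zero G hx

theorem backwardError_eq {c : ι → ℂ} (hc : c ≠ 0) (M : ι → Matrix (Fin n) (Fin n) ℂ) :
    backwardError c M = sigmaMin (∑ i, c i • M i) / √(∑ i, ‖c i‖ ^ 2) := by
  rcases n.eq_zero_or_pos with rfl | hn
  · simp [backwardError, sigmaMin_fin_zero]
  · have : NeZero n := ⟨hn.ne'⟩
    obtain ⟨Δ, hdet, hΔ⟩ := exists_det_eq_zero_sqrt_eq_sigmaMin_div hc M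
    refine IsLeast.csInf_eq ⟨⟨Δ, hdet, hΔ.symm⟩, ?_⟩
    rintro r ⟨Δ', hdet', rfl⟩
    exact sigmaMin_div_le_of_det_eq_zero hdet'

theorem backwardError_sumElim {κ : Type*} [Fintype κ] (c : ι → ℂ) (c' : κ → ℂ)
    (M : ι → Matrix (Fin n) (Fin n) ℂ) (M' : κ → Matrix (Fin n) (Fin n) ℂ) :
    backwardError (Sum.elim c c') (Sum.elim M M') =
      sInf {r : ℝ | ∃ (Δ : ι → Matrix (Fin n) (Fin n) ℂ) (Δ' : κ → Matrix (Fin n) (Fin n) ℂ),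
        (∑ i, c i • (M i - Δ i) + ∑ j, c' j • (M' j - Δ' j)).det = 0 ∧
        r = √(∑ i, ‖Δ i‖ ^ 2 + ∑ j, ‖Δ' j‖ ^ 2)} := by
  rw [backwardError]
  congr 1
  ext r
  constructor
  · rintro ⟨Δ, h, rfl⟩
    exact ⟨Δ ∘ Sum.inl, Δ ∘ Sum.inr, by simpa [Fintype.sum_sum_type] using h,
      by simp [Fintype.sum_sum_type]⟩
  · rintro ⟨Δ, Δ', h, rfl⟩
    exact ⟨Sum.elim Δ Δ', by simpa [Fintype.sum_sum_type] using h, by simp [Fintype.sum_sum_type]⟩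

end BackwardError

open Matrix in
/-- Theorem 2.8: the unstructured eigenvalue backward error `η(G,λ)` equals
`σ_min(G(λ)) / ‖(1,λ,…,λ^d,w₁(λ),…,w_k(λ))‖`. -/
theorem unstructured_eigenvalue_backward_error {n d k : ℕ}
    (A : Fin (d + 1) → Matrix (Fin n) (Fin n) ℂ)
    (E : Fin k → Matrix (Fin n) (Fin n) ℂ)
    (lam : ℂ) (w : Fin k → ℂ) :
    sInf {r : ℝ |
        ∃ (ΔA : Fin (d + 1) → Matrix (Fin n) (Fin n) ℂ)
          (ΔE : Fin k → Matrix (Fin n) (Fin n) ℂ),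
          (∑ p : Fin (d + 1), lam ^ (p : ℕ) • (A p - ΔA p)
              + ∑ j, w j • (E j - ΔE j)).det = 0 ∧
          r = Real.sqrt (∑ p : Fin (d + 1), specNorm (ΔA p) ^ 2
              + ∑ j, specNorm (ΔE j) ^ 2)} =
      sigmaMin (∑ p : Fin (d + 1), lam ^ (p : ℕ) • A p + ∑ j, w j • E j) /
        Real.sqrt (∑ p : Fin (d + 1), ‖lam ^ (p : ℕ)‖ ^ 2
          + ∑ j, ‖w j‖ ^ 2) := by
  have hc : Sum.elim (fun p : Fin (d + 1) => lam ^ (p : ℕ)) w ≠ 0 := fun h => by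
    simpa using congr_fun h (Sum.inl 0)
  have h := backwardError_eq hc (Sum.elim A E)
  rw [backwardError_sumElim] at h
  simp only [Fintype.sum_sum_type, Sum.elim_inl, Sum.elim_inr] at h
  simpa only [specNorm_eq_norm] using h
end

section
/- Let x, y₁, y₂ ∈ ℂⁿ with x ≠ 0. There exists a matrix Δ ∈ ℂ^{n×n} with Δx = y₁ and Δ*x = y₂ if and only if y₁*x = x*y₂. Moreover, in that case the minimal spectral norm of such a Δ equals max{‖y₁‖/‖x‖, ‖y₂‖/‖x‖}. -/
/-!
Split `E = 𝕜 x ⊕ x⟂` with `‖x‖ = 1` and write `y₁ = a x + u`, `y₂ = ā x + v` with `u, v ⊥ x`.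
The constraints `Δ x = y₁`, `Δ* x = y₂` prescribe the first column `(a, u)` and the first row
`(a, v*)` of `Δ`; the condition `⟪y₁, x⟫ = ⟪x, y₂⟫` says exactly that both prescribe the same
corner entry. The norm of `Δ` dominates the norms `‖y₁‖`, `‖y₂‖` of that column and row.
Conversely, when `‖v‖ ≤ ‖u‖`, the Davis–Kahan–Weinberger choice of the remaining block gives an
operator of norm `‖y₁‖`; the other case follows by passing to the adjoint, and general `x` by
scaling.
-/

open Matrix

open ComplexConjugate InnerProductSpace ContinuousLinearMap
open scoped InnerProductSpace

section

variable {𝕜 E : Type*} [RCLike 𝕜] [NormedAddCommGroup E] [InnerProductSpace 𝕜 E]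

theorem norm_mul_add_sq_add_norm_sub_sq_mul_sq_le (a α s : 𝕜) {β t : ℝ} (hβ : 0 ≤ β)
    (hs : ‖s‖ ≤ β * t) :
    ‖a * α + s‖ ^ 2 + ‖α - conj (a / (β : 𝕜) ^ 2) * s‖ ^ 2 * β ^ 2 ≤
      (‖a‖ ^ 2 + β ^ 2) * (‖α‖ ^ 2 + t ^ 2) := by
  rcases hβ.eq_or_lt with rfl | hβ
  · obtain rfl : s = 0 := norm_le_zero_iff.mp (by simpa using hs)
    simp only [add_zero, norm_mul, mul_pow, ne_eq, OfNat.ofNat_ne_zero, not_false_eq_true,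
      zero_pow]
    nlinarith [sq_nonneg ‖a‖, sq_nonneg t]
  have hc : conj (a / (β : 𝕜) ^ 2) * s = conj a * s * (((β ^ 2)⁻¹ : ℝ) : 𝕜) := by
    simp [div_eq_mul_inv, mul_right_comm]
  have hst : ‖s‖ ^ 2 / β ^ 2 ≤ t ^ 2 := by
    rw [div_le_iff₀ (by positivity)]
    nlinarith [norm_nonneg s]
  calc _ = (‖a‖ ^ 2 + β ^ 2) * (‖α‖ ^ 2 + ‖s‖ ^ 2 / β ^ 2) := by
        rw [hc]
        simp only [RCLike.norm_sq_eq_def, map_add, map_sub, RCLike.mul_re, RCLike.mul_im,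
          RCLike.conj_re, RCLike.conj_im, RCLike.ofReal_re, RCLike.ofReal_im]
        field_simp
        ring
    _ ≤ _ := by gcongr

theorem inner_sub_inner_smul_self_eq_zero {x : E} (hx : ‖x‖ = 1) (y : E) :
    ⟪x, y - ⟪x, y⟫_𝕜 • x⟫_𝕜 = 0 := by
  simp [inner_sub_right, inner_smul_right, inner_self_eq_norm_sq_to_K, hx]

theorem norm_smul_add_sq_of_inner_eq_zero {x z : E} (hx : ‖x‖ = 1) (hxz : ⟪x, z⟫_𝕜 = 0)
    (c : 𝕜) :
    ‖c • x + z‖ ^ 2 = ‖c‖ ^ 2 + ‖z‖ ^ 2 := by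
  have hxz' : ⟪c • x, z⟫_𝕜 = 0 := by simp [inner_smul_left, hxz]
  rw [sq, sq, sq, norm_add_sq_eq_norm_sq_add_norm_sq_of_inner_eq_zero _ _ hxz', norm_smul, hx,
    mul_one]

-- Relative to `𝕜 x ⊕ x⟂` this is the block operator `[[a, v*], [u, -(ā / ‖u‖²) u v*]]`.
-- If `u = 0` then also `v = 0`, so the junk value `a / 0 = 0` does no harm.
theorem norm_rankOne_add_rankOne_le {x u v : E} (a : 𝕜) (hx : ‖x‖ = 1) (hxu : ⟪x, u⟫_𝕜 = 0)
    (hxv : ⟪x, v⟫_𝕜 = 0) (hvu : ‖v‖ ≤ ‖u‖) :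
    ‖rankOne 𝕜 x (conj a • x + v) + rankOne 𝕜 u (x - (a / (‖u‖ : 𝕜) ^ 2) • v)‖ ≤
      ‖a • x + u‖ := by
  refine opNorm_le_bound _ (norm_nonneg _) fun w ↦ ?_
  set α := ⟪x, w⟫_𝕜
  set s := ⟪v, w⟫_𝕜
  set w' := w - α • x
  have hxw' : ⟪x, w'⟫_𝕜 = 0 := inner_sub_inner_smul_self_eq_zero hx w
  have hnorm_w : ‖w‖ ^ 2 = ‖α‖ ^ 2 + ‖w'‖ ^ 2 := by
    rw [← norm_smul_add_sq_of_inner_eq_zero hx hxw', add_sub_cancel]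
  have hs : ‖s‖ ≤ ‖u‖ * ‖w'‖ := calc
    ‖s‖ = ‖⟪v, w'⟫_𝕜‖ := by
      rw [inner_sub_right, inner_smul_right, inner_eq_zero_symm.mp hxv, mul_zero, sub_zero]
    _ ≤ ‖v‖ * ‖w'‖ := norm_inner_le_norm v w'
    _ ≤ ‖u‖ * ‖w'‖ := by gcongr
  have hTw : (rankOne 𝕜 x (conj a • x + v) + rankOne 𝕜 u (x - (a / (‖u‖ : 𝕜) ^ 2) • v)) w =
      (a * α + s) • x + (α - conj (a / (‖u‖ : 𝕜) ^ 2) * s) • u := by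
    rw [_root_.add_apply, rankOne_apply, rankOne_apply, inner_add_left,
      inner_smul_left, inner_sub_left, inner_smul_left, RCLike.conj_conj]
  calc _ = √(‖_‖ ^ 2) := (Real.sqrt_sq (norm_nonneg _)).symm
    _ = √(‖a * α + s‖ ^ 2 + ‖α - conj (a / (‖u‖ : 𝕜) ^ 2) * s‖ ^ 2 * ‖u‖ ^ 2) := by
        rw [hTw, norm_smul_add_sq_of_inner_eq_zero hx (by rw [inner_smul_right, hxu, mul_zero]),
          norm_smul, mul_pow]
    _ ≤ √((‖a‖ ^ 2 + ‖u‖ ^ 2) * (‖α‖ ^ 2 + ‖w'‖ ^ 2)) :=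
      Real.sqrt_le_sqrt (norm_mul_add_sq_add_norm_sub_sq_mul_sq_le a α s (norm_nonneg u) hs)
    _ = ‖a • x + u‖ * ‖w‖ := by
      rw [← norm_smul_add_sq_of_inner_eq_zero hx hxu, ← hnorm_w, ← mul_pow,
        Real.sqrt_sq (by positivity)]

variable [CompleteSpace E]

theorem exists_apply_eq_adjoint_apply_eq_norm_le_of_norm_eq_one {x y₁ y₂ : E} (hx : ‖x‖ = 1)
    (h : ⟪y₁, x⟫_𝕜 = ⟪x, y₂⟫_𝕜) (hle : ‖y₂‖ ≤ ‖y₁‖) :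
    ∃ T : E →L[𝕜] E, T x = y₁ ∧ adjoint T x = y₂ ∧ ‖T‖ ≤ ‖y₁‖ := by
  set a := ⟪x, y₁⟫_𝕜
  have hxy₂ : ⟪x, y₂⟫_𝕜 = conj a := by rw [← h, inner_conj_symm]
  set u := y₁ - a • x
  set v := y₂ - conj a • x
  have hxu : ⟪x, u⟫_𝕜 = 0 := inner_sub_inner_smul_self_eq_zero hx y₁
  have hxv : ⟪x, v⟫_𝕜 = 0 := by
    simpa only [hxy₂] using inner_sub_inner_smul_self_eq_zero (𝕜 := 𝕜) hx y₂
  have hy₁ : y₁ = a • x + u := (add_sub_cancel _ _).symm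
  have hy₂ : y₂ = conj a • x + v := (add_sub_cancel _ _).symm
  have hvu : ‖v‖ ≤ ‖u‖ := by
    have := pow_le_pow_left₀ (norm_nonneg _) hle 2
    rw [hy₁, hy₂, norm_smul_add_sq_of_inner_eq_zero hx hxu,
      norm_smul_add_sq_of_inner_eq_zero hx hxv, RCLike.norm_conj] at this
    exact pow_le_pow_iff_left₀ (norm_nonneg _) (norm_nonneg _) two_ne_zero |>.mp (by linarith)
  have hxx : ⟪x, x⟫_𝕜 = 1 := by simp [inner_self_eq_norm_sq_to_K, hx]
  refine ⟨rankOne 𝕜 x y₂ + rankOne 𝕜 u (x - (a / (‖u‖ : 𝕜) ^ 2) • v), ?_, ?_, ?_⟩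
  · rw [_root_.add_apply, rankOne_apply, rankOne_apply, inner_sub_left,
      inner_smul_left, hxx, inner_eq_zero_symm.mp hxv, mul_zero, sub_zero, one_smul,
      ← inner_conj_symm, hxy₂, RCLike.conj_conj, hy₁]
  · rw [map_add, adjoint_rankOne, adjoint_rankOne, _root_.add_apply, rankOne_apply,
      rankOne_apply, hxx, inner_eq_zero_symm.mp hxu, one_smul, zero_smul, add_zero]
  · rw [hy₂]
    exact hy₁ ▸ norm_rankOne_add_rankOne_le a hx hxu hxv hvu

theorem exists_apply_eq_adjoint_apply_eq_norm_le_max_of_norm_eq_one {x y₁ y₂ : E}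
    (hx : ‖x‖ = 1) (h : ⟪y₁, x⟫_𝕜 = ⟪x, y₂⟫_𝕜) :
    ∃ T : E →L[𝕜] E, T x = y₁ ∧ adjoint T x = y₂ ∧ ‖T‖ ≤ max ‖y₁‖ ‖y₂‖ := by
  rcases le_total ‖y₂‖ ‖y₁‖ with hle | hle
  · obtain ⟨T, hT₁, hT₂, hT⟩ :=
      exists_apply_eq_adjoint_apply_eq_norm_le_of_norm_eq_one hx h hle
    exact ⟨T, hT₁, hT₂, hT.trans (le_max_left _ _)⟩
  · have h' : ⟪y₂, x⟫_𝕜 = ⟪x, y₁⟫_𝕜 := by rw [← inner_conj_symm, ← h, inner_conj_symm]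
    obtain ⟨T, hT₁, hT₂, hT⟩ :=
      exists_apply_eq_adjoint_apply_eq_norm_le_of_norm_eq_one hx h' hle
    refine ⟨adjoint T, hT₂, by rwa [adjoint_adjoint], ?_⟩
    rw [LinearIsometryEquiv.norm_map]
    exact hT.trans (le_max_right _ _)

theorem exists_apply_eq_adjoint_apply_eq_norm_le_max {x y₁ y₂ : E} (hx : x ≠ 0)
    (h : ⟪y₁, x⟫_𝕜 = ⟪x, y₂⟫_𝕜) :
    ∃ T : E →L[𝕜] E, T x = y₁ ∧ adjoint T x = y₂ ∧
      ‖T‖ ≤ max (‖y₁‖ / ‖x‖) (‖y₂‖ / ‖x‖) := by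
  have hx₀ : ‖x‖ ≠ 0 := norm_ne_zero_iff.mpr hx
  set c : 𝕜 := ((‖x‖⁻¹ : ℝ) : 𝕜)
  have hc : c ≠ 0 := by simpa [c] using hx₀
  have hcx : ‖c • x‖ = 1 := by simp [c, norm_smul, hx₀]
  have hc' : ⟪c • y₁, c • x⟫_𝕜 = ⟪c • x, c • y₂⟫_𝕜 := by
    simp only [inner_smul_left, inner_smul_right, h, c, RCLike.conj_ofReal]
  obtain ⟨T, hT₁, hT₂, hT⟩ :=
    exists_apply_eq_adjoint_apply_eq_norm_le_max_of_norm_eq_one hcx hc'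
  refine ⟨T, ?_, ?_, ?_⟩
  · rwa [map_smul, smul_right_injective E hc |>.eq_iff] at hT₁
  · rwa [map_smul, smul_right_injective E hc |>.eq_iff] at hT₂
  · simpa [c, norm_smul, div_eq_inv_mul] using hT

theorem max_div_norm_le_opNorm {x y₁ y₂ : E} (T : E →L[𝕜] E) (hT₁ : T x = y₁)
    (hT₂ : adjoint T x = y₂) :
    max (‖y₁‖ / ‖x‖) (‖y₂‖ / ‖x‖) ≤ ‖T‖ := by
  have h₁ := hT₁ ▸ T.le_opNorm x
  have h₂ := hT₂ ▸ (adjoint T).le_opNorm x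
  rw [LinearIsometryEquiv.norm_map] at h₂
  exact max_le (div_le_of_le_mul₀ (norm_nonneg _) (norm_nonneg _) h₁)
    (div_le_of_le_mul₀ (norm_nonneg _) (norm_nonneg _) h₂)

theorem inner_eq_of_apply_eq_adjoint_apply_eq {x y₁ y₂ : E} (T : E →L[𝕜] E) (hT₁ : T x = y₁)
    (hT₂ : adjoint T x = y₂) : ⟪y₁, x⟫_𝕜 = ⟪x, y₂⟫_𝕜 := by
  rw [← hT₁, ← hT₂, adjoint_inner_right]

theorem exists_apply_eq_adjoint_apply_eq_iff {x : E} (hx : x ≠ 0) (y₁ y₂ : E) :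
    (∃ T : E →L[𝕜] E, T x = y₁ ∧ adjoint T x = y₂) ↔ ⟪y₁, x⟫_𝕜 = ⟪x, y₂⟫_𝕜 :=
  ⟨fun ⟨T, hT₁, hT₂⟩ ↦ inner_eq_of_apply_eq_adjoint_apply_eq T hT₁ hT₂, fun h ↦
    let ⟨T, hT₁, hT₂, _⟩ := exists_apply_eq_adjoint_apply_eq_norm_le_max hx h; ⟨T, hT₁, hT₂⟩⟩

theorem isLeast_opNorm_of_apply_eq_adjoint_apply_eq {x y₁ y₂ : E} (hx : x ≠ 0)
    (h : ⟪y₁, x⟫_𝕜 = ⟪x, y₂⟫_𝕜) :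
    IsLeast {r : ℝ | ∃ T : E →L[𝕜] E, T x = y₁ ∧ adjoint T x = y₂ ∧ ‖T‖ = r}
      (max (‖y₁‖ / ‖x‖) (‖y₂‖ / ‖x‖)) := by
  obtain ⟨T, hT₁, hT₂, hT⟩ := exists_apply_eq_adjoint_apply_eq_norm_le_max hx h
  refine ⟨⟨T, hT₁, hT₂, hT.antisymm (max_div_norm_le_opNorm T hT₁ hT₂)⟩, ?_⟩
  rintro _ ⟨T', hT'₁, hT'₂, rfl⟩
  exact max_div_norm_le_opNorm T' hT'₁ hT'₂

end

namespace Matrix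

variable {𝕜 ι : Type*} [RCLike 𝕜] [Fintype ι]

theorem star_dotProduct_eq_inner (x y : ι → 𝕜) :
    star x ⬝ᵥ y = ⟪WithLp.toLp 2 x, WithLp.toLp 2 y⟫_𝕜 := by
  rw [EuclideanSpace.inner_toLp_toLp, dotProduct_comm]

variable [DecidableEq ι]

theorem toEuclideanCLM_conjTranspose (A : Matrix ι ι 𝕜) :
    toEuclideanCLM (𝕜 := 𝕜) Aᴴ = adjoint (toEuclideanCLM (𝕜 := 𝕜) A) := by
  rw [← star_eq_conjTranspose, map_star, star_eq_adjoint]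

theorem mulVec_eq_and_conjTranspose_mulVec_eq_iff (A : Matrix ι ι 𝕜) (x y₁ y₂ : ι → 𝕜) :
    A *ᵥ x = y₁ ∧ Aᴴ *ᵥ x = y₂ ↔
      toEuclideanCLM (𝕜 := 𝕜) A (WithLp.toLp 2 x) = WithLp.toLp 2 y₁ ∧
        adjoint (toEuclideanCLM (𝕜 := 𝕜) A) (WithLp.toLp 2 x) = WithLp.toLp 2 y₂ := by
  simp only [← toEuclideanCLM_conjTranspose, toEuclideanCLM_toLp,
    (WithLp.toLp_injective 2).eq_iff]

end Matrix

/-- Two-sided mapping theorem (Mehl–Mehrmann–Sharma): for `x ≠ 0` there exists `Δ` with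
`Δx = y₁` and `Δ*x = y₂` iff `y₁*x = x*y₂`, and in that case the minimal spectral norm
of such `Δ` equals `max{‖y₁‖/‖x‖, ‖y₂‖/‖x‖}`. -/
theorem two_sided_mapping {n : ℕ} (x y₁ y₂ : Fin n → ℂ) (hx : x ≠ 0) :
    ((∃ Δ : Matrix (Fin n) (Fin n) ℂ, Δ.mulVec x = y₁ ∧ Δᴴ.mulVec x = y₂) ↔
      star y₁ ⬝ᵥ x = star x ⬝ᵥ y₂) ∧
    (star y₁ ⬝ᵥ x = star x ⬝ᵥ y₂ →
      IsLeast {r : ℝ | ∃ Δ : Matrix (Fin n) (Fin n) ℂ,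
          Δ.mulVec x = y₁ ∧ Δᴴ.mulVec x = y₂ ∧ specNorm Δ = r}
        (max (evNorm y₁ / evNorm x) (evNorm y₂ / evNorm x))) := by
  let e := (toEuclideanCLM (𝕜 := ℂ) (n := Fin n)).toEquiv
  have hX : WithLp.toLp 2 x ≠ 0 := by simpa using hx
  simp only [star_dotProduct_eq_inner]
  refine ⟨(e.exists_congr fun Δ ↦ mulVec_eq_and_conjTranspose_mulVec_eq_iff Δ x y₁ y₂).trans
    (exists_apply_eq_adjoint_apply_eq_iff hX _ _), fun h ↦ ?_⟩
  convert isLeast_opNorm_of_apply_eq_adjoint_apply_eq hX h using 1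
  · ext r
    refine e.exists_congr fun Δ ↦ ?_
    rw [← and_assoc, mulVec_eq_and_conjTranspose_mulVec_eq_iff, and_assoc]
    rfl
  · rfl
end
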